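/- arXiv:2407.05704 — 3 statements merged into one kernel-verified Lean document; each statement's English description precedes it below -/
import Mathlib

section
/- Performance difference lemma: for two policies π and π' in a finite-horizon MDP with common transition kernel P, reward functions r_h : S×A → ℝ, and horizon H, one has V₁^{π}(s₁) − V₁^{π'}(s₁) = ∑_{h=1}^{H} ∑_{s} μ_h^{π}(s) ∑_{a} π_h(a|s) · A_h^{π'}(s,a), where μ_h^{π} is the state distribution at stage h induced by π from s₁, and A_h^{π'}(s,a) = Q_h^{π'}(s,a) − V_h^{π'}(s) is the advantage function of π'. -/
open Finset

variable {S A : Type*}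

/-- Auxiliary backward value recursion: `valAux P r π k h s` is the value at stage `h`,
state `s`, with `k` stages remaining (including `h`). -/
noncomputable def valAux [Fintype S] [Fintype A] (P : ℕ → S → A → S → ℝ)
    (r : ℕ → S → A → ℝ) (π : ℕ → S → A → ℝ) : ℕ → ℕ → S → ℝ
  | 0, _, _ => 0
  | k + 1, h, s => ∑ a, π h s a *
      (r h s a + ∑ s', P h s a s' * valAux P r π k (h + 1) s')

/-- Value function `V_h^{π,r,P}(s)` in an `H`-horizon MDP (stages `1,…,H`). -/
noncomputable def Val [Fintype S] [Fintype A] (H : ℕ) (P : ℕ → S → A → S → ℝ)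
    (r : ℕ → S → A → ℝ) (π : ℕ → S → A → ℝ) (h : ℕ) (s : S) : ℝ :=
  valAux P r π (H + 1 - h) h s

/-- Q-value function `Q_h^{π,r,P}(s,a)`; satisfies Bellman's equation, with
`Val H P r π (H+1) = 0`, so `Q_H = r_H`. -/
noncomputable def Qval [Fintype S] [Fintype A] (H : ℕ) (P : ℕ → S → A → S → ℝ)
    (r : ℕ → S → A → ℝ) (π : ℕ → S → A → ℝ) (h : ℕ) (s : S) (a : A) : ℝ :=
  r h s a + ∑ s', P h s a s' * Val H P r π (h + 1) s'

/-- State distribution `μ_h^{π,P,s₁}` at stage `h` induced by policy `π` and kernels `P`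
from initial state `s₁`. -/
noncomputable def occup [Fintype S] [Fintype A] [DecidableEq S]
    (P : ℕ → S → A → S → ℝ) (π : ℕ → S → A → ℝ) (s₁ : S) : ℕ → S → ℝ
  | 0, _ => 0
  | 1, s => if s = s₁ then 1 else 0
  | h + 2, s' => ∑ s, ∑ a, occup P π s₁ (h + 1) s * π (h + 1) s a * P (h + 1) s a s'

/-!
Let `g_h = ∑ s, μ_h^π(s) (V_h^π(s) - V_h^{π'}(s))`. Since `μ_{h+1}^π` is the push-forward of
`μ_h^π` under `π_h` and `P_h`, one Bellman step for both policies shows that the `h`-th advantage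
term equals `g_h - g_{h+1}`. The sum therefore telescopes to `g_1 - g_{H+1}`, where `g_1` is the
value gap at `s₁` and `g_{H+1} = 0`.
-/

section FiniteHorizon

variable [Fintype S] [Fintype A] (H : ℕ) (P : ℕ → S → A → S → ℝ) (r : ℕ → S → A → ℝ)

lemma Val_eq_sum_mul_Qval (π : ℕ → S → A → ℝ) {h : ℕ} (hh : h ≤ H) (s : S) :
    Val H P r π h s = ∑ a, π h s a * Qval H P r π h s a := by
  rw [Val, show H + 1 - h = H + 1 - (h + 1) + 1 by omega, valAux]
  rfl

lemma Val_horizon_succ (π : ℕ → S → A → ℝ) (s : S) : Val H P r π (H + 1) s = 0 := by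
  rw [Val, Nat.sub_self, valAux]

variable [DecidableEq S] (π : ℕ → S → A → ℝ) (s₁ : S)

lemma sum_occup_one_mul (f : S → ℝ) : ∑ s, occup P π s₁ 1 s * f s = f s₁ := by
  simp only [occup, ite_mul, one_mul, zero_mul, Finset.sum_ite_eq', Finset.mem_univ, if_true]

lemma sum_occup_succ_mul {h : ℕ} (hh : 1 ≤ h) (f : S → ℝ) :
    ∑ s', occup P π s₁ (h + 1) s' * f s' =
      ∑ s, occup P π s₁ h s * ∑ a, π h s a * ∑ s', P h s a s' * f s' := by
  obtain ⟨n, rfl⟩ : ∃ n, h = n + 1 := ⟨h - 1, by omega⟩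
  simp only [occup, Finset.sum_mul, Finset.mul_sum]
  rw [Finset.sum_comm]
  refine Finset.sum_congr rfl fun s _ => ?_
  rw [Finset.sum_comm]
  exact Finset.sum_congr rfl fun a _ => Finset.sum_congr rfl fun s' _ => by ring

lemma sum_occup_mul_sum_mul_Qval (σ : ℕ → S → A → ℝ) {h : ℕ} (hh : 1 ≤ h) :
    ∑ s, occup P π s₁ h s * ∑ a, π h s a * Qval H P r σ h s a =
      ∑ s, occup P π s₁ h s * ∑ a, π h s a * r h s a +
        ∑ s, occup P π s₁ (h + 1) s * Val H P r σ (h + 1) s := by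
  simp only [sum_occup_succ_mul P π s₁ hh, Qval, mul_add, Finset.sum_add_distrib]

noncomputable def occupValGap (π' : ℕ → S → A → ℝ) (h : ℕ) : ℝ :=
  ∑ s, occup P π s₁ h s * (Val H P r π h s - Val H P r π' h s)

lemma sum_occup_mul_advantage (π' : ℕ → S → A → ℝ) (hπ1 : ∀ h s, ∑ a, π h s a = 1)
    {h : ℕ} (hh : 1 ≤ h) (hhH : h ≤ H) :
    ∑ s, occup P π s₁ h s * ∑ a, π h s a * (Qval H P r π' h s a - Val H P r π' h s) =
      occupValGap H P r π s₁ π' h - occupValGap H P r π s₁ π' (h + 1) := by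
  have hV' : ∀ s, ∑ a, π h s a * Val H P r π' h s = Val H P r π' h s := fun s => by
    rw [← Finset.sum_mul, hπ1, one_mul]
  have hQ := sum_occup_mul_sum_mul_Qval H P r π s₁ π' hh
  have hV := sum_occup_mul_sum_mul_Qval H P r π s₁ π hh
  simp only [← Val_eq_sum_mul_Qval H P r π hhH] at hV
  simp only [occupValGap, mul_sub, Finset.sum_sub_distrib, hV'] at hQ hV ⊢
  linarith

end FiniteHorizon

theorem performance_difference_general [Fintype S] [Fintype A] [DecidableEq S]
    (H : ℕ)
    (P : ℕ → S → A → S → ℝ) (r : ℕ → S → A → ℝ) (π π' : ℕ → S → A → ℝ) (s₁ : S)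
    (hπ1 : ∀ h s, ∑ a, π h s a = 1) :
    Val H P r π 1 s₁ - Val H P r π' 1 s₁ =
      ∑ h ∈ Finset.Icc 1 H, ∑ s, occup P π s₁ h s *
        ∑ a, π h s a * (Qval H P r π' h s a - Val H P r π' h s) := by
  set gap := occupValGap H P r π s₁ π'
  have hstep : ∀ h ∈ Finset.Icc 1 H, ∑ s, occup P π s₁ h s *
      ∑ a, π h s a * (Qval H P r π' h s a - Val H P r π' h s) = -(gap (h + 1) - gap h) :=
    fun h hh => by
      rw [neg_sub, sum_occup_mul_advantage H P r π s₁ π' hπ1 (Finset.mem_Icc.1 hh).1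
        (Finset.mem_Icc.1 hh).2]
  have hgap_one : gap 1 = Val H P r π 1 s₁ - Val H P r π' 1 s₁ :=
    sum_occup_one_mul P π s₁ _
  have hgap_last : gap (H + 1) = 0 := by
    simp only [gap, occupValGap, Val_horizon_succ, sub_self, mul_zero, Finset.sum_const_zero]
  rw [Finset.sum_congr rfl hstep, Finset.sum_neg_distrib, ← Finset.Ico_add_one_right_eq_Icc,
    Finset.sum_Ico_sub gap (by omega), hgap_one, hgap_last]
  ring

/-- Performance difference lemma:
V₁^{π}(s₁) − V₁^{π'}(s₁) = ∑_{h=1}^{H} ∑_s μ_h^{π}(s) ∑_a π_h(a|s) A_h^{π'}(s,a). -/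
theorem performance_difference [Fintype S] [Fintype A] [DecidableEq S]
    (H : ℕ) (hH : 1 ≤ H)
    (P : ℕ → S → A → S → ℝ) (r : ℕ → S → A → ℝ) (π π' : ℕ → S → A → ℝ) (s₁ : S)
    (hP0 : ∀ h s a s', 0 ≤ P h s a s') (hP1 : ∀ h s a, ∑ s', P h s a s' = 1)
    (hπ0 : ∀ h s a, 0 ≤ π h s a) (hπ1 : ∀ h s, ∑ a, π h s a = 1)
    (hπ'0 : ∀ h s a, 0 ≤ π' h s a) (hπ'1 : ∀ h s, ∑ a, π' h s a = 1) :
    Val H P r π 1 s₁ - Val H P r π' 1 s₁ =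
      ∑ h ∈ Finset.Icc 1 H, ∑ s, occup P π s₁ h s *
        ∑ a, π h s a * (Qval H P r π' h s a - Val H P r π' h s) :=
  performance_difference_general H P r π π' s₁ hπ1
end

section
/- Performance difference between transition kernels: for a policy π and two transition kernel families P and P̂ with the same rewards, V₁^{π,P̂}(s₁) − V₁^{π,P}(s₁) = E_{π,P}[ ∑_{h=1}^{H−1} ((P̂_h − P_h) • V_{h+1}^{π,P̂})(s_h, a_h) ], where the expectation is over trajectories generated by π under kernels P starting from s₁, and (K • f)(s,a) = ∑_{s'} K(s'|s,a) f(s'). -/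
open Finset

variable {S A : Type*}

/-!
Subtracting the two Bellman equations at stage `h` splits `V̂_h - V_h` into the kernel gap
`(P̂_h - P_h) • V̂_{h+1}` plus the stage-`(h+1)` gap `V̂_{h+1} - V_{h+1}` transported by `P_h`.
Averaging over `μ_h = μ_h^{π,P,s₁}`, the transported term becomes the stage-`(h+1)` gap averaged
over `μ_{h+1}`, so the averaged gaps telescope from `μ_1 = δ_{s₁}` down to stage `H`, where both
values equal the expected last reward and the gap vanishes.
-/

section

variable [Fintype S] [Fintype A] {H : ℕ} {P Phat : ℕ → S → A → S → ℝ} {r : ℕ → S → A → ℝ}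
  {π : ℕ → S → A → ℝ}

lemma Val_bellman {h : ℕ} (hh : h ≤ H) (s : S) :
    Val H P r π h s = ∑ a, π h s a * (r h s a + ∑ s', P h s a s' * Val H P r π (h + 1) s') := by
  simp only [Val]
  rw [show H + 1 - h = H - h + 1 by omega, show H + 1 - (h + 1) = H - h by omega,
    valAux]

lemma Val_horizon (s : S) : Val H P r π H s = ∑ a, π H s a * r H s a := by
  simp [Val, valAux]

lemma Val_sub_Val {h : ℕ} (hh : h ≤ H) (s : S) :
    Val H Phat r π h s - Val H P r π h s = ∑ a, π h s a *
      (∑ s', (Phat h s a s' - P h s a s') * Val H Phat r π (h + 1) s' +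
        ∑ s', P h s a s' * (Val H Phat r π (h + 1) s' - Val H P r π (h + 1) s')) := by
  rw [Val_bellman hh, Val_bellman hh, ← sum_sub_distrib]
  refine sum_congr rfl fun a _ => ?_
  simp only [sub_mul, mul_sub, sum_sub_distrib]
  ring

variable [DecidableEq S] {s₁ : S}

lemma occup_succ {h : ℕ} (hh : 1 ≤ h) (s' : S) :
    occup P π s₁ (h + 1) s' = ∑ s, ∑ a, occup P π s₁ h s * π h s a * P h s a s' := by
  obtain ⟨n, rfl⟩ := Nat.exists_eq_add_of_le' hh
  rfl

lemma sum_occup_mul_kernel {h : ℕ} (hh : 1 ≤ h) (f : S → ℝ) :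
    ∑ s, occup P π s₁ h s * ∑ a, π h s a * ∑ s', P h s a s' * f s' =
      ∑ s', occup P π s₁ (h + 1) s' * f s' := by
  simp only [occup_succ hh, mul_sum, sum_mul]
  conv_rhs => rw [sum_comm]; enter [2, s]; rw [sum_comm]
  simp only [mul_assoc]

lemma sum_occup_mul_Val_sub_Val {h : ℕ} (h1 : 1 ≤ h) (hh : h ≤ H) :
    ∑ s, occup P π s₁ h s * (Val H Phat r π h s - Val H P r π h s) =
      ∑ s, occup P π s₁ h s * ∑ a, π h s a *
          ∑ s', (Phat h s a s' - P h s a s') * Val H Phat r π (h + 1) s' +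
        ∑ s', occup P π s₁ (h + 1) s' *
          (Val H Phat r π (h + 1) s' - Val H P r π (h + 1) s') := by
  simp only [Val_sub_Val hh, mul_add, sum_add_distrib]
  rw [sum_occup_mul_kernel h1]

end

theorem performance_difference_kernels_general [Fintype S] [Fintype A] [DecidableEq S]
    (H : ℕ) (hH : 1 ≤ H)
    (P Phat : ℕ → S → A → S → ℝ) (r : ℕ → S → A → ℝ) (π : ℕ → S → A → ℝ) (s₁ : S) :
    Val H Phat r π 1 s₁ - Val H P r π 1 s₁ =
      ∑ h ∈ Finset.Icc 1 (H - 1), ∑ s, occup P π s₁ h s *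
        ∑ a, π h s a *
          ∑ s', (Phat h s a s' - P h s a s') * Val H Phat r π (h + 1) s' := by
  set D : ℕ → ℝ := fun h => ∑ s, occup P π s₁ h s * (Val H Phat r π h s - Val H P r π h s)
  have hD1 : D 1 = Val H Phat r π 1 s₁ - Val H P r π 1 s₁ := by simp [D, occup]
  have hDH : D H = 0 := by simp [D, Val_horizon]
  rw [← hD1, ← Ico_add_one_right_eq_Icc, Nat.sub_add_cancel hH]
  calc D 1 = -∑ h ∈ Ico 1 H, (D (h + 1) - D h) := by rw [sum_Ico_sub D hH, hDH]; ring
    _ = _ := by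
      rw [← sum_neg_distrib]
      refine sum_congr rfl fun h hh => ?_
      obtain ⟨h1, hhH⟩ := mem_Ico.mp hh
      rw [neg_sub, sub_eq_iff_eq_add]
      exact sum_occup_mul_Val_sub_Val h1 hhH.le

/-- Performance difference between transition kernels: for a policy π and two kernel
families P and P̂ with the same rewards,
V₁^{π,P̂}(s₁) − V₁^{π,P}(s₁) = E_{π,P}[ ∑_{h=1}^{H−1} ((P̂_h − P_h) • V_{h+1}^{π,P̂})(s_h,a_h) ],
the expectation over trajectories induced by (π, P) from s₁ being written via the induced
state distributions μ_h^{π,P,s₁}. -/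
theorem performance_difference_kernels [Fintype S] [Fintype A] [DecidableEq S]
    (H : ℕ) (hH : 1 ≤ H)
    (P Phat : ℕ → S → A → S → ℝ) (r : ℕ → S → A → ℝ) (π : ℕ → S → A → ℝ) (s₁ : S)
    (hP0 : ∀ h s a s', 0 ≤ P h s a s') (hP1 : ∀ h s a, ∑ s', P h s a s' = 1)
    (hPhat0 : ∀ h s a s', 0 ≤ Phat h s a s') (hPhat1 : ∀ h s a, ∑ s', Phat h s a s' = 1)
    (hπ0 : ∀ h s a, 0 ≤ π h s a) (hπ1 : ∀ h s, ∑ a, π h s a = 1) :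
    Val H Phat r π 1 s₁ - Val H P r π 1 s₁ =
      ∑ h ∈ Finset.Icc 1 (H - 1), ∑ s, occup P π s₁ h s *
        ∑ a, π h s a *
          ∑ s', (Phat h s a s' - P h s a s') * Val H Phat r π (h + 1) s' :=
  performance_difference_kernels_general H hH P Phat r π s₁
end

section
/- Optimism by induction: fix optimistic kernels P̂_h and bonuses b_h : S×A → [0,H] with b_H ≡ 0. Suppose for all h ∈ [H−1] and all (s,a), |((P̂_h − P_h) • V_{h+1}^{π,r,P})(s,a)| ≤ b_h(s,a). Then for all h ∈ [H] and all (s,a): Q_h^{π,r,P}(s,a) ≤ Q_h^{π,r+b,P̂}(s,a) and V_h^{π,r,P}(s) ≤ V_h^{π,r+b,P̂}(s). -/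
open Finset

variable {S A : Type*}

/-- Optimism by induction: if the bonuses dominate the estimation error of the kernel in
the direction of the true value function, then the optimistic Q-values and values
(computed with rewards r + b and kernels P̂) upper bound the true ones. -/
theorem optimism [Fintype S] [Fintype A]
    (H : ℕ) (hH : 1 ≤ H)
    (P Phat : ℕ → S → A → S → ℝ) (r : ℕ → S → A → ℝ) (b : ℕ → S → A → ℝ)
    (π : ℕ → S → A → ℝ)
    (hP0 : ∀ h s a s', 0 ≤ P h s a s') (hP1 : ∀ h s a, ∑ s', P h s a s' = 1)
    (hPhat0 : ∀ h s a s', 0 ≤ Phat h s a s')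
    (hPhat1 : ∀ h s a, ∑ s', Phat h s a s' = 1)
    (hπ0 : ∀ h s a, 0 ≤ π h s a) (hπ1 : ∀ h s, ∑ a, π h s a = 1)
    (hr : ∀ h s a, r h s a ∈ Set.Icc (0 : ℝ) 1)
    (hb : ∀ h s a, b h s a ∈ Set.Icc (0 : ℝ) H)
    (hbH : ∀ s a, b H s a = 0)
    (hdom : ∀ h ∈ Finset.Icc 1 (H - 1), ∀ s a,
      |∑ s', (Phat h s a s' - P h s a s') * Val H P r π (h + 1) s'| ≤ b h s a) :
    ∀ h ∈ Finset.Icc 1 H, ∀ (s : S) (a : A),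
      Qval H P r π h s a ≤ Qval H Phat (fun h s a => r h s a + b h s a) π h s a ∧
      Val H P r π h s ≤ Val H Phat (fun h s a => r h s a + b h s a) π h s := by

  set r' : ℕ → S → A → ℝ := fun h s a => r h s a + b h s a with hr'def
  have hValend : ∀ (Q : ℕ → S → A → S → ℝ) (rr : ℕ → S → A → ℝ) (s : S),
      Val H Q rr π (H + 1) s = 0 := by
    intro Q rr s
    have : H + 1 - (H + 1) = 0 := by omega
    simp [Val, this, valAux]
  have bell : ∀ (Q : ℕ → S → A → S → ℝ) (rr : ℕ → S → A → ℝ) (h : ℕ), h ≤ H → ∀ s,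
      Val H Q rr π h s = ∑ a, π h s a * Qval H Q rr π h s a := by
    intro Q rr h hh s
    have h1 : H + 1 - h = (H - h) + 1 := by omega
    have h2 : H + 1 - (h + 1) = H - h := by omega
    simp only [Val, Qval, h1, valAux, h2]
  have key : ∀ n h, 1 ≤ h → h + n = H →
      (∀ s a, Qval H P r π h s a ≤ Qval H Phat r' π h s a) ∧
      (∀ s, Val H P r π h s ≤ Val H Phat r' π h s) := by
    intro n
    induction n with
    | zero =>
      intro h h1 hhH
      have hEnd : h = H := by omega
      have hq : ∀ s a, Qval H P r π h s a ≤ Qval H Phat r' π h s a := by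
        intro s a
        rw [hEnd]
        simp only [Qval, hValend, mul_zero, Finset.sum_const_zero, add_zero]
        simp [hr'def, hbH s a]
      refine ⟨hq, fun s => ?_⟩
      rw [bell P r h (by omega) s, bell Phat r' h (by omega) s]
      exact Finset.sum_le_sum fun a _ =>
        mul_le_mul_of_nonneg_left (hq s a) (hπ0 h s a)
    | succ n ih =>
      intro h h1 hhH
      have hh1 : 1 ≤ h + 1 := by omega
      have ihs := ih (h + 1) hh1 (by omega)
      have hq : ∀ s a, Qval H P r π h s a ≤ Qval H Phat r' π h s a := by
        intro s a
        have hdom' := hdom h (by simp [Finset.mem_Icc]; omega) s a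
        have h2 : ∑ s', P h s a s' * Val H P r π (h + 1) s'
            ≤ b h s a + ∑ s', Phat h s a s' * Val H Phat r' π (h + 1) s' := by
          have e1 : ∑ s', Phat h s a s' * Val H P r π (h + 1) s'
              = (∑ s', (Phat h s a s' - P h s a s') * Val H P r π (h + 1) s')
                + ∑ s', P h s a s' * Val H P r π (h + 1) s' := by
            rw [← Finset.sum_add_distrib]; congr 1; ext s'; ring
          have h3 : ∑ s', Phat h s a s' * Val H P r π (h + 1) s'
              ≤ ∑ s', Phat h s a s' * Val H Phat r' π (h + 1) s' :=
            Finset.sum_le_sum fun s' _ =>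
              mul_le_mul_of_nonneg_left (ihs.2 s') (hPhat0 h s a s')
          have h4 := neg_abs_le (∑ s', (Phat h s a s' - P h s a s') * Val H P r π (h + 1) s')
          nlinarith [hdom']
        simp only [Qval, hr'def]
        linarith
      refine ⟨hq, fun s => ?_⟩
      rw [bell P r h (by omega) s, bell Phat r' h (by omega) s]
      exact Finset.sum_le_sum fun a _ =>
        mul_le_mul_of_nonneg_left (hq s a) (hπ0 h s a)
  intro h hmem s a
  simp only [Finset.mem_Icc] at hmem
  exact ⟨(key (H - h) h hmem.1 (by omega)).1 s a, (key (H - h) h hmem.1 (by omega)).2 s⟩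
end
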